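/- Let d > 0 and let c : [0,d] → ℝ satisfy c(d) ≤ 1 and, for all x ∈ [0,d], c(x)·(1 - c(x)) - x·c'(x) ≤ 0, with c non-decreasing, non-negative, differentiable, c(d) > 0. Let P₁ ⪯ P₂ be alternatives to Q (τ_{P₁} ≤ τ_{P₂}, τ'_{P₁∩Q} ≤ τ'_{P₂∩Q} on [0,d]) with Quotient-Model flows x_{P₁}, x_{P₂} ∈ [0,d]. If x_{P₁} ≤ x_{P₂}, x_{P₂} > 0, g_P(x) = (d-x)·c(x) + x, C_{Pᵢ} ≤ g_P(x_{Pᵢ})·(τ_{Pᵢ\Q}(x_{Pᵢ}) + τ_{Pᵢ∩Q}(d)) with equality for i = 2, then C_{P₁} ≤ C_{P₂}. -/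

import Mathlib

/-!
The cost bound factors as `g_P(x) · S_P(x)` with `g_P(x) = (d - x) c(x) + x` and
`S_P(x) = τ_{P\Q}(x) + τ_{P∩Q}(d)`, both non-negative, so it suffices that each factor grows
from `P₁` at `x₁` to `P₂` at `x₂`. For `g_P` this is monotonicity, which holds because
`c ≤ c(d) ≤ 1`. For `S_P`, write `τ_{P\Q}(x₂) = τ_P(x₂) - τ_{P∩Q}(x₂)`: dominance of `τ_P` handles
the first term, and dominance of the derivatives makes `τ_{P₂∩Q} - τ_{P₁∩Q}` non-decreasing, which
handles the move of the shared part from `x₂` to `d`.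
-/

open Finset Set

lemma monotoneOn_sub_mul_add_self {c : ℝ → ℝ} {a d : ℝ} (hc : MonotoneOn c (Icc a d))
    (hcd : c d ≤ 1) : MonotoneOn (fun x => (d - x) * c x + x) (Icc a d) := by
  intro x hx y hy hxy
  have hcxy : c x ≤ c y := hc hx hy hxy
  have hcx : c x ≤ c d := hc hx (right_mem_Icc.2 (hx.1.trans hx.2)) hx.2
  nlinarith [hy.2]

lemma monotoneOn_sub_of_deriv_le {f g : ℝ → ℝ} {s : Set ℝ} (hs : Convex ℝ s)
    (hf : Differentiable ℝ f) (hg : Differentiable ℝ g)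
    (hfg : ∀ x ∈ interior s, deriv f x ≤ deriv g x) : MonotoneOn (fun x => g x - f x) s := by
  refine monotoneOn_of_deriv_nonneg hs (hg.sub hf).continuous.continuousOn
    (hg.sub hf).differentiableOn fun x hx => ?_
  rw [deriv_fun_sub (hg x) (hf x), sub_nonneg]
  exact hfg x hx

lemma monotoneOn_sum_sub_sum_of_deriv_le {ι : Type*} {A B : Finset ι} {τ : ι → ℝ → ℝ}
    {s : Set ℝ} (hs : Convex ℝ s) (hτ : ∀ i, Differentiable ℝ (τ i))
    (hAB : ∀ x ∈ interior s, ∑ i ∈ A, deriv (τ i) x ≤ ∑ i ∈ B, deriv (τ i) x) :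
    MonotoneOn (fun x => ∑ i ∈ B, τ i x - ∑ i ∈ A, τ i x) s := by
  refine monotoneOn_sub_of_deriv_le hs (Differentiable.fun_sum fun i _ => hτ i)
    (Differentiable.fun_sum fun i _ => hτ i) fun x hx => ?_
  rw [deriv_fun_sum fun i _ => hτ i x, deriv_fun_sum fun i _ => hτ i x]
  exact hAB x hx

lemma sum_sdiff_add_sum_inter_le {ι : Type*} [DecidableEq ι] {P₁ P₂ Q : Finset ι}
    {τ : ι → ℝ → ℝ} {s : Set ℝ} (hτ : ∀ i, MonotoneOn (τ i) s)
    (hdom : ∀ x ∈ s, ∑ i ∈ P₁, τ i x ≤ ∑ i ∈ P₂, τ i x)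
    (hshared : MonotoneOn (fun x => ∑ i ∈ P₂ ∩ Q, τ i x - ∑ i ∈ P₁ ∩ Q, τ i x) s)
    {x₁ x₂ d : ℝ} (hx₁ : x₁ ∈ s) (hx₂ : x₂ ∈ s) (hd : d ∈ s) (hx₁₂ : x₁ ≤ x₂) (hx₂d : x₂ ≤ d) :
    ∑ i ∈ P₁ \ Q, τ i x₁ + ∑ i ∈ P₁ ∩ Q, τ i d ≤ ∑ i ∈ P₂ \ Q, τ i x₂ + ∑ i ∈ P₂ ∩ Q, τ i d := by
  have hstep : ∑ i ∈ P₁ \ Q, τ i x₁ ≤ ∑ i ∈ P₁ \ Q, τ i x₂ :=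
    sum_le_sum fun i _ => hτ i hx₁ hx₂ hx₁₂
  have hsplit₁ := sum_inter_add_sum_sdiff P₁ Q (τ · x₂)
  have hsplit₂ := sum_inter_add_sum_sdiff P₂ Q (τ · x₂)
  have hmove := hshared hx₂ hd hx₂d
  linarith [hdom x₂ hx₂]

theorem stmt_17_general {E : Type*} [DecidableEq E] (d : ℝ)
    (c : ℝ → ℝ)
    (hcmono : MonotoneOn c (Set.Icc 0 d))
    (hcnonneg : ∀ x ∈ Set.Icc (0 : ℝ) d, 0 ≤ c x)
    (hcd1 : c d ≤ 1)
    (P₁ P₂ Q : Finset E) (τ : E → ℝ → ℝ)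
    (hdiff : ∀ e : E, Differentiable ℝ (τ e))
    (hmono : ∀ e : E, MonotoneOn (τ e) (Set.Icc 0 d))
    (hpos : ∀ e : E, ∀ x ∈ Set.Icc (0 : ℝ) d, 0 < τ e x)
    (hdom₁ : ∀ x ∈ Set.Icc (0 : ℝ) d, (∑ e ∈ P₁, τ e x) ≤ ∑ e ∈ P₂, τ e x)
    (hdom₂ : ∀ x ∈ Set.Icc (0 : ℝ) d,
      (∑ e ∈ P₁ ∩ Q, deriv (τ e) x) ≤ ∑ e ∈ P₂ ∩ Q, deriv (τ e) x)
    (x₁ x₂ : ℝ) (hx₁ : x₁ ∈ Set.Icc (0 : ℝ) d) (hx₂ : x₂ ∈ Set.Icc (0 : ℝ) d)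
    (hle : x₁ ≤ x₂)
    (C₁ C₂ : ℝ)
    (hbound₁ : C₁ ≤ ((d - x₁) * c x₁ + x₁) * ((∑ e ∈ P₁ \ Q, τ e x₁) + ∑ e ∈ P₁ ∩ Q, τ e d))
    (hbound₂ : C₂ = ((d - x₂) * c x₂ + x₂) * ((∑ e ∈ P₂ \ Q, τ e x₂) + ∑ e ∈ P₂ ∩ Q, τ e d)) :
    C₁ ≤ C₂ := by
  have hd : d ∈ Icc (0 : ℝ) d := right_mem_Icc.2 (hx₁.1.trans hx₁.2)
  have hg : (d - x₁) * c x₁ + x₁ ≤ (d - x₂) * c x₂ + x₂ :=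
    monotoneOn_sub_mul_add_self hcmono hcd1 hx₁ hx₂ hle
  have hg₂ : 0 ≤ (d - x₂) * c x₂ + x₂ :=
    add_nonneg (mul_nonneg (sub_nonneg.2 hx₂.2) (hcnonneg x₂ hx₂)) hx₂.1
  have hS₁ : 0 ≤ (∑ e ∈ P₁ \ Q, τ e x₁) + ∑ e ∈ P₁ ∩ Q, τ e d :=
    add_nonneg (sum_nonneg fun e _ => (hpos e x₁ hx₁).le)
      (sum_nonneg fun e _ => (hpos e d hd).le)
  have hshared := monotoneOn_sum_sub_sum_of_deriv_le (convex_Icc 0 d) hdiff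
    fun x hx => hdom₂ x (interior_subset hx)
  have hS := sum_sdiff_add_sum_inter_le hmono hdom₁ hshared hx₁ hx₂ hd hle hx₂.2
  calc C₁ ≤ ((d - x₁) * c x₁ + x₁) * ((∑ e ∈ P₁ \ Q, τ e x₁) + ∑ e ∈ P₁ ∩ Q, τ e d) := hbound₁
    _ ≤ ((d - x₂) * c x₂ + x₂) * ((∑ e ∈ P₂ \ Q, τ e x₂) + ∑ e ∈ P₂ ∩ Q, τ e d) :=
      mul_le_mul hg hS hS₁ hg₂
    _ = C₂ := hbound₂.symm

/-- One case of Pareto-conformity of the Quotient Model: with `c` non-decreasing,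
non-negative, differentiable, `c d ≤ 1`, `c d > 0`,
`c x (1 - c x) - x c' x ≤ 0`, dominance `P₁ ⪯ P₂`, flows `x₁ ≤ x₂` in `[0,d]`
with `x₂ > 0`, and the bounds `C_{Pᵢ} ≤ g_P(x_{Pᵢ})·(τ_{Pᵢ\Q}(x_{Pᵢ}) + τ_{Pᵢ∩Q}(d))`
holding with equality for `i = 2`, we get `C_{P₁} ≤ C_{P₂}`. -/
theorem stmt_17 {E : Type*} [DecidableEq E] (d : ℝ) (hd : 0 < d)
    (c : ℝ → ℝ) (hcdiff : Differentiable ℝ c)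
    (hcmono : MonotoneOn c (Set.Icc 0 d))
    (hcnonneg : ∀ x ∈ Set.Icc (0 : ℝ) d, 0 ≤ c x)
    (hcd1 : c d ≤ 1) (hcd0 : 0 < c d)
    (hccond : ∀ x ∈ Set.Icc (0 : ℝ) d, c x * (1 - c x) - x * deriv c x ≤ 0)
    (P₁ P₂ Q : Finset E) (τ : E → ℝ → ℝ)
    (hdiff : ∀ e : E, Differentiable ℝ (τ e))
    (hmono : ∀ e : E, MonotoneOn (τ e) (Set.Icc 0 d))
    (hpos : ∀ e : E, ∀ x ∈ Set.Icc (0 : ℝ) d, 0 < τ e x)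
    (hdom₁ : ∀ x ∈ Set.Icc (0 : ℝ) d, (∑ e ∈ P₁, τ e x) ≤ ∑ e ∈ P₂, τ e x)
    (hdom₂ : ∀ x ∈ Set.Icc (0 : ℝ) d,
      (∑ e ∈ P₁ ∩ Q, deriv (τ e) x) ≤ ∑ e ∈ P₂ ∩ Q, deriv (τ e) x)
    (x₁ x₂ : ℝ) (hx₁ : x₁ ∈ Set.Icc (0 : ℝ) d) (hx₂ : x₂ ∈ Set.Icc (0 : ℝ) d)
    (hle : x₁ ≤ x₂) (hx₂pos : 0 < x₂)
    (C₁ C₂ : ℝ)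
    (hC₁ : C₁ = x₁ * (∑ e ∈ P₁ \ Q, τ e x₁) + (d - x₁) * (∑ e ∈ Q \ P₁, τ e (d - x₁))
      + d * (∑ e ∈ P₁ ∩ Q, τ e d))
    (hC₂ : C₂ = x₂ * (∑ e ∈ P₂ \ Q, τ e x₂) + (d - x₂) * (∑ e ∈ Q \ P₂, τ e (d - x₂))
      + d * (∑ e ∈ P₂ ∩ Q, τ e d))
    (hbound₁ : C₁ ≤ ((d - x₁) * c x₁ + x₁) * ((∑ e ∈ P₁ \ Q, τ e x₁) + ∑ e ∈ P₁ ∩ Q, τ e d))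
    (hbound₂ : C₂ = ((d - x₂) * c x₂ + x₂) * ((∑ e ∈ P₂ \ Q, τ e x₂) + ∑ e ∈ P₂ ∩ Q, τ e d)) :
    C₁ ≤ C₂ :=
  stmt_17_general d c hcmono hcnonneg hcd1 P₁ P₂ Q τ hdiff hmono hpos hdom₁ hdom₂ x₁ x₂ hx₁ hx₂ hle
    C₁ C₂ hbound₁ hbound₂
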